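/- arXiv:1310.0726 — 2 statements merged into one kernel-verified Lean document; each statement's English description precedes it below -/
import Mathlib

section
/- Under the stated assumptions, a right-window cutoff at (t_n + r_n, w_n) holds: lim_{c → +∞} limsup_{n → ∞} sup_{t > t_n + r_n + c·w_n} d_n(t) = 0. (Note that each d_n is nonincreasing in t since all coefficients a_{i,n} are nonnegative, so sup_{t > t_n + r_n + c·w_n} d_n(t) = d_n(t_n + r_n + c·w_n).) -/
/-!
With `S i = a 0 + ⋯ + a i`, the definition of `t` gives `S i ≤ exp (ρ i t)`. Abel summation
against these partial sums bounds `d (t + u)` by `((t + u) / u) exp (-ρ 0 u)`: each increment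
`exp (ρ i t) (exp (-ρ i s) - exp (-ρ (i+1) s))`, `s = t + u`, is at most
`(s / u) (exp (-ρ i u) - exp (-ρ (i+1) u))` because `(1 - exp (-z)) / z` is decreasing, and these
telescope. For `u = r + c w` one has `ρ 0 u = L - log L + c` with `L = log (ρ 0 t)`, and the bound
becomes `exp (-c) (L / (ρ 0 t) + L / (ρ 0 u)) ≤ 3 exp (-c)` as soon as `ρ 0 t > 1`.
-/

open Filter Real Finset
open scoped ENNReal Topology

lemma mul_one_sub_exp_neg_le_mul {y z : ℝ} (hy : 0 < y) (hyz : y ≤ z) :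
    y * (1 - exp (-z)) ≤ z * (1 - exp (-y)) := by
  have h := convexOn_exp.secant_mono (a := 0) (x := -z) (y := -y) trivial trivial trivial
    (by linarith) (by linarith) (by linarith)
  simp only [exp_zero, sub_zero, div_neg, neg_le_neg_iff] at h
  rw [div_le_div_iff₀ hy (by linarith)] at h
  linarith

lemma exp_mul_mul_sub_exp_le {x y t u : ℝ} (hxy : x ≤ y) (ht : 0 ≤ t) (hu : 0 < u) :
    exp (x * t) * (exp (-x * (t + u)) - exp (-y * (t + u)))
      ≤ (t + u) / u * (exp (-x * u) - exp (-y * u)) := by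
  rcases hxy.eq_or_lt with rfl | hxy
  · simp
  have hδ : 0 < y - x := sub_pos.2 hxy
  have h := mul_one_sub_exp_neg_le_mul (mul_pos hδ hu)
    (mul_le_mul_of_nonneg_left (le_add_of_nonneg_left ht) hδ.le)
  have e1 : exp (x * t) * (exp (-x * (t + u)) - exp (-y * (t + u)))
      = exp (-x * u) * (1 - exp (-((y - x) * (t + u)))) := by
    rw [mul_sub, mul_sub, mul_one, ← exp_add, ← exp_add, ← exp_add]; ring_nf
  have e2 : exp (-x * u) - exp (-y * u) = exp (-x * u) * (1 - exp (-((y - x) * u))) := by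
    rw [mul_sub, mul_one, ← exp_add]; ring_nf
  rw [e1, e2, mul_left_comm]
  refine mul_le_mul_of_nonneg_left ?_ (exp_pos _).le
  rw [div_mul_eq_mul_div, le_div_iff₀ hu]
  refine le_of_mul_le_mul_left ?_ hδ
  linarith

section AbelSummation

variable {a ρ : ℕ → ℝ} {t u : ℝ}

lemma sum_range_succ_mul_exp_le (hρ : Monotone ρ) (ht : 0 ≤ t) (hu : 0 < u)
    (hS : ∀ i, ∑ j ∈ range (i + 1), a j ≤ exp (ρ i * t)) (N : ℕ) :
    ∑ i ∈ range (N + 1), a i * exp (-ρ i * (t + u))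
      ≤ (∑ j ∈ range (N + 1), a j) * exp (-ρ N * (t + u))
        + (t + u) / u * (exp (-ρ 0 * u) - exp (-ρ N * u)) := by
  induction N with
  | zero => simp
  | succ N ih =>
    have hstep := exp_mul_mul_sub_exp_le (hρ N.le_succ) ht hu
    have hdiff : 0 ≤ exp (-ρ N * (t + u)) - exp (-ρ (N + 1) * (t + u)) :=
      sub_nonneg.2 (exp_le_exp.2 (by nlinarith [hρ N.le_succ]))
    have := mul_le_mul_of_nonneg_right (hS N) hdiff
    rw [sum_range_succ, sum_range_succ (f := a)]
    linarith

lemma sum_range_mul_exp_le (hρ : Monotone ρ) (ht : 0 ≤ t) (hu : 0 < u)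
    (hS : ∀ i, ∑ j ∈ range (i + 1), a j ≤ exp (ρ i * t)) (N : ℕ) :
    ∑ i ∈ range N, a i * exp (-ρ i * (t + u)) ≤ (t + u) / u * exp (-ρ 0 * u) := by
  cases N with
  | zero => rw [range_zero, sum_empty]; positivity
  | succ N =>
    have hlast : (∑ j ∈ range (N + 1), a j) * exp (-ρ N * (t + u)) ≤ exp (-ρ N * u) := by
      calc _ ≤ exp (ρ N * t) * exp (-ρ N * (t + u)) :=
            mul_le_mul_of_nonneg_right (hS N) (exp_pos _).le
        _ = exp (-ρ N * u) := by rw [← exp_add]; ring_nf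
    have hratio : 1 ≤ (t + u) / u := by rw [le_div_iff₀ hu]; linarith
    have := mul_le_mul_of_nonneg_right hratio (exp_pos (-ρ N * u)).le
    linarith [sum_range_succ_mul_exp_le hρ ht hu hS N]

lemma tsum_ofReal_mul_exp_le (hρ : Monotone ρ) (ha : ∀ i, 0 ≤ a i) (ht : 0 ≤ t) (hu : 0 < u)
    (hS : ∀ i, ∑ j ∈ range (i + 1), a j ≤ exp (ρ i * t)) :
    ∑' i, ENNReal.ofReal (a i * exp (-ρ i * (t + u)))
      ≤ ENNReal.ofReal ((t + u) / u * exp (-ρ 0 * u)) := by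
  refine ENNReal.tsum_le_of_sum_range_le fun N => ?_
  rw [← ENNReal.ofReal_sum_of_nonneg fun i _ => mul_nonneg (ha i) (exp_pos _).le]
  exact ENNReal.ofReal_le_ofReal (sum_range_mul_exp_le hρ ht hu hS N)

lemma antitone_tsum_ofReal_mul_exp (hρ : ∀ i, 0 ≤ ρ i) (ha : ∀ i, 0 ≤ a i) :
    Antitone fun s => ∑' i, ENNReal.ofReal (a i * exp (-ρ i * s)) := by
  intro s s' hss'
  refine ENNReal.tsum_le_tsum fun i => ENNReal.ofReal_le_ofReal ?_
  exact mul_le_mul_of_nonneg_left (exp_le_exp.2 (by nlinarith [hρ i])) (ha i)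

end AbelSummation

lemma log_le_half_self {x : ℝ} (hx : 0 < x) : log x ≤ x / 2 := by
  have h := log_le_sub_one_of_pos (half_pos hx)
  rw [log_div hx.ne' two_ne_zero] at h
  linarith [log_two_lt_d9]

lemma add_div_mul_exp_neg_le {x c D : ℝ} (hx : 1 < x) (hc : 0 ≤ c)
    (hD : D = log x - log (log x) + c) :
    0 < D ∧ (x + D) / D * exp (-D) ≤ 3 * exp (-c) := by
  have hx0 : 0 < x := one_pos.trans hx
  have hL : 0 < log x := log_pos hx
  have hLD : log x ≤ 2 * D := by linarith [log_le_half_self hL]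
  have hD0 : 0 < D := by linarith
  refine ⟨hD0, ?_⟩
  have hexp : exp (-D) = exp (-c) * (log x / x) := by
    rw [hD, show -(log x - log (log x) + c) = -c + (log (log x) - log x) by ring, exp_add,
      exp_sub, exp_log hL, exp_log hx0]
  have hLx : log x / x ≤ 1 := (div_le_one hx0).2 (log_le_self hx0.le)
  have hLD' : log x / D ≤ 2 := (div_le_iff₀ hD0).2 hLD
  calc (x + D) / D * exp (-D) = exp (-c) * (log x / D + log x / x) := by
        rw [hexp]; field_simp
    _ ≤ exp (-c) * 3 := mul_le_mul_of_nonneg_left (by linarith) (exp_pos _).le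
    _ = 3 * exp (-c) := mul_comm _ _

lemma le_exp_mul_of_log_max_one_div_le {S ρ t : ℝ} (hρ : 0 < ρ) (h : log (max 1 S) / ρ ≤ t) :
    S ≤ exp (ρ * t) :=
  calc S ≤ max 1 S := le_max_right _ _
    _ = exp (log (max 1 S)) := (exp_log (lt_max_of_lt_left one_pos)).symm
    _ ≤ exp (ρ * t) := exp_le_exp.2 (by rwa [div_le_iff₀' hρ] at h)

theorem iSup_tsum_ofReal_mul_exp_le {a ρ : ℕ → ℝ} {t c : ℝ} (hρ0 : 0 < ρ 0) (hρ : Monotone ρ)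
    (ha : ∀ i, 0 ≤ a i) (hS : ∀ i, ∑ j ∈ range (i + 1), a j ≤ exp (ρ i * t))
    (hx : 1 < ρ 0 * t) (hc : 0 ≤ c) :
    ⨆ (s : ℝ) (_ : t + (log (ρ 0 * t) - log (log (ρ 0 * t)) + c) / ρ 0 < s),
      ∑' i, ENNReal.ofReal (a i * exp (-ρ i * s)) ≤ ENNReal.ofReal (3 * exp (-c)) := by
  set D := log (ρ 0 * t) - log (log (ρ 0 * t)) + c with hD
  obtain ⟨hD0, hbound⟩ := add_div_mul_exp_neg_le hx hc hD
  have ht : 0 ≤ t := (pos_of_mul_pos_right (one_pos.trans hx) hρ0.le).le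
  have hρ_nonneg i : 0 ≤ ρ i := hρ0.le.trans (hρ (Nat.zero_le i))
  refine iSup₂_le fun s hs => ?_
  calc _ ≤ ∑' i, ENNReal.ofReal (a i * exp (-ρ i * (t + D / ρ 0))) :=
        antitone_tsum_ofReal_mul_exp hρ_nonneg ha hs.le
    _ ≤ ENNReal.ofReal ((t + D / ρ 0) / (D / ρ 0) * exp (-ρ 0 * (D / ρ 0))) :=
        tsum_ofReal_mul_exp_le hρ ha ht (div_pos hD0 hρ0) hS
    _ = ENNReal.ofReal ((ρ 0 * t + D) / D * exp (-D)) := by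
        congr 2 <;> field_simp
    _ ≤ ENNReal.ofReal (3 * exp (-c)) := ENNReal.ofReal_le_ofReal hbound

-- Indices are zero-based: Lean index `i` is the paper's index `i + 1`.
theorem right_window_cutoff_general
    (a ρ : ℕ → ℕ → ℝ)
    (hρ_pos : ∀ n i, 0 < ρ n i)
    (hρ_mono : ∀ n, StrictMono (ρ n))
    (ha_nonneg : ∀ n i, 0 ≤ a n i)
    (A : ℕ → ℕ → ℝ)
    (hA : ∀ n i, A n i = max 1 (∑ j ∈ Finset.range (i + 1), a n j))
    (d : ℕ → ℝ → ℝ≥0∞)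
    (hd : ∀ n s, d n s = ∑' i, ENNReal.ofReal (a n i * Real.exp (-(ρ n i) * s)))
    (t w r : ℕ → ℝ)
    (ht : ∀ᶠ n in atTop,
      IsLUB (Set.range fun i => Real.log (A n i) / ρ n i) (t n) ∧ 0 < t n)
    (hw : ∀ n, w n = 1 / ρ n 0)
    (hr : ∀ n, r n = w n * (Real.log (ρ n 0 * t n) - Real.log (Real.log (ρ n 0 * t n))))
    (hPeres : Tendsto (fun n => ρ n 0 * t n) atTop atTop) :
    Tendsto
      (fun c : ℝ => Filter.limsup
        (fun n => ⨆ (s : ℝ) (_ : t n + r n + c * w n < s), d n s) atTop)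
      atTop (𝓝 (0 : ℝ≥0∞)) := by
  have hbound : ∀ᶠ c : ℝ in atTop,
      limsup (fun n => ⨆ (s : ℝ) (_ : t n + r n + c * w n < s), d n s) atTop
        ≤ ENNReal.ofReal (3 * exp (-c)) := by
    filter_upwards [eventually_ge_atTop 0] with c hc
    refine limsup_le_of_le (by isBoundedDefault) ?_
    filter_upwards [ht, hPeres.eventually_gt_atTop 1] with n ⟨hlub, _⟩ hx
    have hwindow : t n + r n + c * w n
        = t n + (log (ρ n 0 * t n) - log (log (ρ n 0 * t n)) + c) / ρ n 0 := by
      rw [hr, hw]; ring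
    have hS i : ∑ j ∈ range (i + 1), a n j ≤ exp (ρ n i * t n) :=
      le_exp_mul_of_log_max_one_div_le (hρ_pos n i) (hA n i ▸ hlub.1 ⟨i, rfl⟩)
    simp only [hwindow, hd]
    exact iSup_tsum_ofReal_mul_exp_le (hρ_pos n 0) (hρ_mono n).monotone (ha_nonneg n) hS hx hc
  have hlim : Tendsto (fun c : ℝ => ENNReal.ofReal (3 * exp (-c))) atTop (𝓝 0) := by
    simpa using ENNReal.tendsto_ofReal (tendsto_exp_neg_atTop_nhds_zero.const_mul 3)
  exact tendsto_of_tendsto_of_tendsto_of_le_of_le' tendsto_const_nhds hlim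
    (Eventually.of_forall fun _ => zero_le) hbound

/-- Theorem 2 of Barrera–Ycart: a right-window cutoff at `(t_n + r_n, w_n)` holds:
`lim_{c → +∞} limsup_n sup_{s > t_n + r_n + c w_n} d_n(s) = 0`.
Indices are zero-based: Lean index `i` corresponds to paper index `i+1`. -/
theorem right_window_cutoff
    (a ρ : ℕ → ℕ → ℝ)
    (hρ_pos : ∀ n i, 0 < ρ n i)
    (hρ_mono : ∀ n, StrictMono (ρ n))
    (ha_nonneg : ∀ n i, 0 ≤ a n i)
    (ha_pos : ∀ n, 0 < a n 0)
    (A : ℕ → ℕ → ℝ)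
    (hA : ∀ n i, A n i = max 1 (∑ j ∈ Finset.range (i + 1), a n j))
    (d : ℕ → ℝ → ℝ≥0∞)
    (hd : ∀ n s, d n s = ∑' i, ENNReal.ofReal (a n i * Real.exp (-(ρ n i) * s)))
    (t w r : ℕ → ℝ)
    (ht : ∀ᶠ n in atTop,
      IsLUB (Set.range fun i => Real.log (A n i) / ρ n i) (t n) ∧ 0 < t n)
    (hw : ∀ n, w n = 1 / ρ n 0)
    (hr : ∀ n, r n = w n * (Real.log (ρ n 0 * t n) - Real.log (Real.log (ρ n 0 * t n))))
    (hPeres : Tendsto (fun n => ρ n 0 * t n) atTop atTop)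
    (hα : ∃ α > (0 : ℝ), ∀ᶠ n in atTop, ∀ i, a n (i + 1) ≤ α * A n i) :
    Tendsto
      (fun c : ℝ => Filter.limsup
        (fun n => ⨆ (s : ℝ) (_ : t n + r n + c * w n < s), d n s) atTop)
      atTop (𝓝 (0 : ℝ≥0∞)) :=
  right_window_cutoff_general a ρ hρ_pos hρ_mono ha_nonneg A hA d hd t w r ht hw hr hPeres
end

section
/- For every real c, lim_{n → ∞} Σ_{i=2}^{m_n} e^{−n}·(e^n + (i−1)·e^{−n})^{−(1 + ℓ_n/n + c/n)} = e^{−c}. -/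
open Filter Real
open scoped Topology

/-- `ℓ_n = log(n / log n)`. -/
noncomputable def ell (n : ℕ) : ℝ := Real.log (n / Real.log n)

/-!
Write the summand as `r f(i - 1)` with `f t = (s + t r)^{-(1+q)}`, `s = eⁿ`, `r = e⁻ⁿ` and
`q = (ℓ_n + c)/n → 0`. As `f` is decreasing, the sum lies between two integrals of `r f`, each of
the form `(A^{-q} - B^{-q})/q`. For `A ~ eⁿ` we have `A^{-q} ~ e^{-c} e^{-ℓ_n} = e^{-c} log n / n`,
so `A^{-q}/q ~ e^{-c} log n / (ℓ_n + c) → e^{-c}`. The upper endpoint `B ≥ 9ⁿe⁻ⁿ = eⁿ(9/e²)ⁿ`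
only contributes `A^{-q}/q · (9/e²)^{-(ℓ_n + c)} → 0`.
-/

section AffineRpow

variable {r s q : ℝ}

theorem integral_mul_rpow_affine (hr : 0 < r) (hq : q ≠ 0) {a b : ℝ} (hab : a ≤ b)
    (ha : 0 < s + a * r) :
    ∫ t in a..b, r * (s + t * r) ^ (-(1 + q)) =
      ((s + a * r) ^ (-q) - (s + b * r) ^ (-q)) / q := by
  have hzero : (0 : ℝ) ∉ Set.uIcc (r * a + s) (r * b + s) := by
    rw [Set.uIcc_of_le (by gcongr)]
    exact fun h => (h.1.trans_lt' (by linarith)).false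
  simp_rw [intervalIntegral.integral_const_mul, fun t => add_comm s (t * r), mul_comm _ r]
  rw [intervalIntegral.integral_comp_mul_add (fun x => x ^ (-(1 + q))) hr.ne',
    integral_rpow (Or.inr ⟨by contrapose! hq; linarith, hzero⟩), smul_eq_mul,
    show -(1 + q) + 1 = -q by ring]
  field_simp
  ring

theorem antitoneOn_mul_rpow_affine (hr : 0 < r) (hs : 0 < s) (hq : 0 ≤ 1 + q) :
    AntitoneOn (fun t => r * (s + t * r) ^ (-(1 + q))) (Set.Ici 0) := by
  intro x hx _ _ hxy
  have hsx : 0 < s + x * r := by have : 0 ≤ x * r := mul_nonneg hx hr.le; linarith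
  exact mul_le_mul_of_nonneg_left (rpow_le_rpow_of_nonpos hsx (by gcongr) (by linarith)) hr.le

theorem sum_mul_rpow_affine_le (hr : 0 < r) (hs : 0 < s) (hq : 0 < q) (N : ℕ) :
    ∑ i ∈ Finset.range N, r * (s + ((i : ℝ) + 1) * r) ^ (-(1 + q)) ≤
      (s ^ (-q) - (s + N * r) ^ (-q)) / q := by
  have h := AntitoneOn.sum_le_integral (x₀ := 0) (a := N)
    ((antitoneOn_mul_rpow_affine hr hs (by linarith)).mono fun _ hx => hx.1)
  rw [integral_mul_rpow_affine hr hq.ne' (by positivity) (by simpa)] at h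
  simpa [add_comm] using h

theorem le_sum_mul_rpow_affine (hr : 0 < r) (hs : 0 < s) (hq : 0 < q) (N : ℕ) :
    ((s + r) ^ (-q) - (s + (N + 1) * r) ^ (-q)) / q ≤
      ∑ i ∈ Finset.range N, r * (s + ((i : ℝ) + 1) * r) ^ (-(1 + q)) := by
  have h := AntitoneOn.integral_le_sum (x₀ := 1) (a := N)
    ((antitoneOn_mul_rpow_affine hr hs (by linarith)).mono fun _ hx => zero_le_one.trans hx.1)
  rw [integral_mul_rpow_affine hr hq.ne' (by simp) (by positivity)] at h
  simpa [add_comm] using h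

end AffineRpow

theorem sum_Icc_two_eq_sum_range {M : Type*} [AddCommMonoid M] (g : ℝ → M) (m : ℕ) :
    ∑ i ∈ Finset.Icc 2 m, g ((i : ℝ) - 1) = ∑ k ∈ Finset.range (m - 1), g ((k : ℝ) + 1) := by
  rw [← Finset.Ico_add_one_right_eq_Icc, Finset.sum_Ico_eq_sum_range,
    show m + 1 - 2 = m - 1 by omega]
  refine Finset.sum_congr rfl fun k _ => congrArg g ?_
  push_cast
  ring

theorem tendsto_log_natCast_atTop : Tendsto (fun n : ℕ => log n) atTop atTop :=
  tendsto_log_atTop.comp tendsto_natCast_atTop_atTop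

theorem ell_eq_log_sub_log_log {n : ℕ} (hn : 1 < n) : ell n = log n - log (log n) :=
  log_div (by positivity) (log_pos (Nat.one_lt_cast.2 hn)).ne'

theorem exp_neg_ell {n : ℕ} (hn : 1 < n) : exp (-ell n) = log n / n := by
  have := log_pos (Nat.one_lt_cast.2 hn)
  rw [ell, ← log_inv, exp_log (by positivity), inv_div]

theorem tendsto_ell_div_log : Tendsto (fun n : ℕ => ell n / log n) atTop (𝓝 1) := by
  have h : Tendsto (fun n : ℕ => 1 - log (log n) / log n) atTop (𝓝 (1 - 0)) :=
    tendsto_const_nhds.sub (isLittleO_log_id_atTop.tendsto_div_nhds_zero.comp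
      tendsto_log_natCast_atTop)
  rw [sub_zero] at h
  refine h.congr' ?_
  filter_upwards [eventually_gt_atTop 1] with n hn
  rw [ell_eq_log_sub_log_log hn, sub_div, div_self (log_pos (Nat.one_lt_cast.2 hn)).ne']

theorem tendsto_ell_atTop : Tendsto ell atTop atTop := by
  refine (tendsto_log_natCast_atTop.atTop_mul_pos one_pos tendsto_ell_div_log).congr' ?_
  filter_upwards [eventually_gt_atTop 1] with n hn
  exact mul_div_cancel₀ _ (log_pos (Nat.one_lt_cast.2 hn)).ne'

theorem tendsto_ell_add_div_log (c : ℝ) :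
    Tendsto (fun n : ℕ => (ell n + c) / log n) atTop (𝓝 1) := by
  have h := tendsto_ell_div_log.add
    (tendsto_const_nhds (x := c).div_atTop tendsto_log_natCast_atTop)
  rw [add_zero] at h
  exact h.congr fun n => (add_div _ _ _).symm

noncomputable def excessExponent (c : ℝ) (n : ℕ) : ℝ := (ell n + c) / n

theorem tendsto_excessExponent (c : ℝ) : Tendsto (excessExponent c) atTop (𝓝 0) := by
  have h := ((isLittleO_log_id_atTop.tendsto_div_nhds_zero.comp tendsto_natCast_atTop_atTop).mul
    (tendsto_ell_add_div_log c))
  rw [zero_mul] at h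
  refine h.congr' ?_
  filter_upwards [eventually_gt_atTop 1] with n hn
  have := log_pos (Nat.one_lt_cast.2 hn)
  simp only [Function.comp_apply, id, excessExponent]
  field_simp

theorem eventually_excessExponent_pos (c : ℝ) : ∀ᶠ n in atTop, 0 < excessExponent c n := by
  filter_upwards [tendsto_ell_atTop.eventually_gt_atTop (-c), eventually_gt_atTop 0] with n hc hn
  exact div_pos (by linarith) (Nat.cast_pos.2 hn)

theorem exp_rpow_neg_excessExponent (c : ℝ) {n : ℕ} (hn : n ≠ 0) :
    exp n ^ (-excessExponent c n) = exp (-c) * exp (-ell n) := by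
  rw [← exp_mul, ← exp_add, excessExponent]
  congr 1
  field_simp
  ring

theorem tendsto_exp_rpow_div_excessExponent (c : ℝ) :
    Tendsto (fun n : ℕ => exp n ^ (-excessExponent c n) / excessExponent c n) atTop
      (𝓝 (exp (-c))) := by
  have h := ((tendsto_ell_add_div_log c).inv₀ one_ne_zero).const_mul (exp (-c))
  rw [inv_one, mul_one] at h
  refine h.congr' ?_
  filter_upwards [eventually_gt_atTop 1] with n hn
  have := log_pos (Nat.one_lt_cast.2 hn)
  rw [exp_rpow_neg_excessExponent c (by omega), exp_neg_ell hn, excessExponent]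
  field_simp

theorem tendsto_rpow_div_excessExponent_of_div_exp (c : ℝ) {A : ℕ → ℝ} {a₀ : ℝ}
    (hA : Tendsto (fun n : ℕ => A n / exp n) atTop (𝓝 a₀)) (ha₀ : 0 < a₀) :
    Tendsto (fun n : ℕ => A n ^ (-excessExponent c n) / excessExponent c n) atTop
      (𝓝 (exp (-c))) := by
  have h := (tendsto_exp_rpow_div_excessExponent c).mul
    (hA.rpow (tendsto_excessExponent c).neg (Or.inl ha₀.ne'))
  rw [neg_zero, rpow_zero, mul_one] at h
  refine h.congr' ?_
  filter_upwards [hA.eventually (lt_mem_nhds ha₀)] with n hn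
  rw [div_rpow ((div_pos_iff_of_pos_right (exp_pos _)).1 hn).le (exp_pos _).le]
  field_simp

theorem tendsto_rpow_div_excessExponent_of_exp_mul_pow_le (c : ℝ) {B : ℕ → ℝ} {ρ : ℝ}
    (hρ : 1 < ρ) (hB : ∀ᶠ n : ℕ in atTop, exp n * ρ ^ n ≤ B n) :
    Tendsto (fun n : ℕ => B n ^ (-excessExponent c n) / excessExponent c n) atTop (𝓝 0) := by
  have hρ_pow : Tendsto (fun n : ℕ => ρ ^ (-(ell n + c))) atTop (𝓝 0) :=
    (tendsto_rpow_atBot_of_base_gt_one ρ hρ).comp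
      (tendsto_neg_atTop_atBot.comp (tendsto_atTop_add_const_right _ c tendsto_ell_atTop))
  have hρ₀ : 0 < ρ := one_pos.trans hρ
  have h := (tendsto_exp_rpow_div_excessExponent c).mul hρ_pow
  rw [mul_zero] at h
  refine squeeze_zero' ?_ ?_ h
  · filter_upwards [hB, eventually_excessExponent_pos c] with n hn hq
    have : 0 < B n := hn.trans_lt' (by positivity)
    positivity
  · filter_upwards [hB, eventually_excessExponent_pos c, eventually_ne_atTop 0] with n hn hq hn0
    calc B n ^ (-excessExponent c n) / excessExponent c n
        ≤ (exp n * ρ ^ n) ^ (-excessExponent c n) / excessExponent c n := by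
          gcongr ?_ / _
          exact rpow_le_rpow_of_nonpos (by positivity) hn (by linarith)
      _ = exp n ^ (-excessExponent c n) / excessExponent c n * ρ ^ (-(ell n + c)) := by
          rw [mul_rpow (exp_pos _).le (by positivity), ← rpow_natCast, ← rpow_mul hρ₀.le,
            excessExponent, mul_div_right_comm]
          field_simp

theorem tendsto_rpow_sub_rpow_div_excessExponent (c : ℝ) {A B : ℕ → ℝ} {a₀ ρ : ℝ}
    (hA : Tendsto (fun n : ℕ => A n / exp n) atTop (𝓝 a₀)) (ha₀ : 0 < a₀) (hρ : 1 < ρ)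
    (hB : ∀ᶠ n : ℕ in atTop, exp n * ρ ^ n ≤ B n) :
    Tendsto (fun n : ℕ => (A n ^ (-excessExponent c n) - B n ^ (-excessExponent c n)) /
      excessExponent c n) atTop (𝓝 (exp (-c))) := by
  have h := (tendsto_rpow_div_excessExponent_of_div_exp c hA ha₀).sub
    (tendsto_rpow_div_excessExponent_of_exp_mul_pow_le c hρ hB)
  rw [sub_zero] at h
  exact h.congr fun n => (sub_div _ _ _).symm

theorem tendsto_exp_add_exp_neg_div_exp :
    Tendsto (fun x : ℝ => (exp x + exp (-x)) / exp x) atTop (𝓝 1) := by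
  have h := tendsto_const_nhds (x := (1 : ℝ)).add
    ((tendsto_exp_atBot.comp tendsto_neg_atTop_atBot).div_atTop tendsto_exp_atTop)
  rw [add_zero] at h
  exact h.congr fun x => by rw [add_div, div_self (exp_pos x).ne', Function.comp_apply]

theorem exp_mul_pow_nine_mul_exp_neg_two (n : ℕ) :
    exp n * (9 * exp (-2)) ^ n = 9 ^ n * exp (-n) := by
  rw [mul_pow, ← exp_nat_mul, mul_left_comm, ← exp_add]
  ring_nf

theorem one_lt_nine_mul_exp_neg_two : 1 < 9 * exp (-2) := by
  have h : exp 2 = exp 1 ^ 2 := by rw [← exp_nat_mul]; norm_num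
  rw [exp_neg, ← div_eq_mul_inv, one_lt_div (exp_pos _), h]
  nlinarith [exp_one_lt_three, exp_pos 1]

/-- The second term of the proof of Lemma 1 in Barrera–Ycart tends to `e^{-c}`:
`Σ_{i=2}^{9^n} e^{-n} (e^n + (i-1) e^{-n})^{-(1 + ℓ_n/n + c/n)} → e^{-c}`. -/
theorem second_term_limit (c : ℝ) :
    Tendsto
      (fun n : ℕ => ∑ i ∈ Finset.Icc (2 : ℕ) (9 ^ n),
        Real.exp (-(n : ℝ)) *
          (Real.exp n + ((i : ℝ) - 1) * Real.exp (-(n : ℝ))) ^ (-(1 + ell n / n + c / n)))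
      atTop (𝓝 (Real.exp (-c))) := by
  set N : ℕ → ℕ := fun n => 9 ^ n - 1
  have hsum (n : ℕ) : ∑ i ∈ Finset.Icc (2 : ℕ) (9 ^ n),
      exp (-(n : ℝ)) * (exp n + ((i : ℝ) - 1) * exp (-(n : ℝ))) ^ (-(1 + ell n / n + c / n)) =
      ∑ i ∈ Finset.range (N n), exp (-(n : ℝ)) *
        (exp n + ((i : ℝ) + 1) * exp (-(n : ℝ))) ^ (-(1 + excessExponent c n)) := by
    rw [sum_Icc_two_eq_sum_range (fun t => exp (-(n : ℝ)) *
        (exp n + t * exp (-(n : ℝ))) ^ (-(1 + ell n / n + c / n))),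
      excessExponent, add_div, add_assoc]
  have hB (n : ℕ) : exp n * (9 * exp (-2)) ^ n ≤ exp n + N n * exp (-(n : ℝ)) := by
    have hN : (N n : ℝ) + 1 = 9 ^ n := by
      rw [Nat.cast_sub (Nat.one_le_pow _ _ (by norm_num))]
      push_cast
      ring
    rw [exp_mul_pow_nine_mul_exp_neg_two, ← hN, add_mul, one_mul, add_comm]
    gcongr
    exact neg_le_self n.cast_nonneg
  have hlo := tendsto_rpow_sub_rpow_div_excessExponent c
    (tendsto_exp_add_exp_neg_div_exp.comp tendsto_natCast_atTop_atTop) one_pos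
    one_lt_nine_mul_exp_neg_two (B := fun n => exp n + (N n + 1) * exp (-(n : ℝ)))
    (.of_forall fun n => (hB n).trans (by gcongr; linarith))
  have hup := tendsto_rpow_sub_rpow_div_excessExponent c
    (tendsto_const_nhds.congr fun n => (div_self (exp_pos n).ne').symm) one_pos
    one_lt_nine_mul_exp_neg_two (.of_forall hB)
  simp only [hsum]
  refine tendsto_of_tendsto_of_tendsto_of_le_of_le' hlo hup ?_ ?_ <;>
    filter_upwards [eventually_excessExponent_pos c] with n hq
  · exact le_sum_mul_rpow_affine (exp_pos _) (exp_pos _) hq _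
  · exact sum_mul_rpow_affine_le (exp_pos _) (exp_pos _) hq _
end
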